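/- arXiv:1804.05643 — 3 statements merged into one kernel-verified Lean document; each statement's English description precedes it below -/
import Mathlib

section
/- Let τ(f) denote the number of monic divisors of a nonzero polynomial f ∈ F_q[t]. For every ε > 0 there exists a constant C(ε) > 0, depending only on ε (and in particular independent of q), such that τ(f) ≤ C(ε) |f|^ε for all nonzero f ∈ F_q[t], where |f| = q^{deg f}. -/
open scoped Classical
open Polynomial

noncomputable section

/-- The number of monic divisors of a polynomial `f`. -/
def tauPoly {Fq : Type} [Field Fq] (f : Polynomial Fq) : ℕ :=
  Nat.card {g : Polynomial Fq // g.Monic ∧ g ∣ f}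

/-!
Write `f = ∏ pᵉᵖ`, so that `τ(f) = ∏ (eₚ + 1)` and `|f|^ε = ∏ xₚ^eₚ` with `xₚ = |p|^ε ≥ 2^ε`.
Since `e + 1 ≤ 2ᵉ`, every factor with `xₚ ≥ 2` satisfies `eₚ + 1 ≤ xₚ^eₚ`; the remaining factors
are each at most `max 1 (2^ε - 1)⁻¹` times `xₚ^eₚ` by Bernoulli's inequality. They come from
primes with `|p| < 2^(1/ε)`, which forces both `q` and `deg p` to be bounded in terms of `ε`
alone, so there are boundedly many of them.
-/

open UniqueFactorizationMonoid Finset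

theorem natCast_add_one_le_pow_of_two_le {x : ℝ} (hx : 2 ≤ x) (e : ℕ) : (e : ℝ) + 1 ≤ x ^ e :=
  calc (e : ℝ) + 1 ≤ 2 ^ e := by exact_mod_cast Nat.lt_two_pow_self
    _ ≤ x ^ e := pow_le_pow_left₀ zero_le_two hx e

theorem natCast_add_one_le_mul_pow {s x : ℝ} (hs : 0 < s) (hx : 1 + s ≤ x) (e : ℕ) :
    (e : ℝ) + 1 ≤ max 1 s⁻¹ * x ^ e :=
  calc (e : ℝ) + 1 ≤ max 1 s⁻¹ * (1 + e * s) := by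
        rcases le_total 1 s with h1 | h1
        · calc (e : ℝ) + 1 ≤ 1 + e * s := by nlinarith
            _ ≤ max 1 s⁻¹ * (1 + e * s) := le_mul_of_one_le_left (by positivity) (le_max_left _ _)
        · calc (e : ℝ) + 1 ≤ s⁻¹ + e := by linarith [(one_le_inv₀ hs).mpr h1]
            _ = s⁻¹ * (1 + e * s) := by field_simp
            _ ≤ max 1 s⁻¹ * (1 + e * s) := by gcongr; exact le_max_right _ _
    _ ≤ max 1 s⁻¹ * (1 + s) ^ e := by gcongr; exact one_add_mul_le_pow (by linarith) e
    _ ≤ max 1 s⁻¹ * x ^ e := by gcongr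

theorem prod_natCast_add_one_le {ι : Type*} (P : Finset ι) (e : ι → ℕ) (x : ι → ℝ) {s : ℝ}
    (hs : 0 < s) (hx : ∀ i ∈ P, 1 + s ≤ x i) :
    ∏ i ∈ P, ((e i : ℝ) + 1) ≤ max 1 s⁻¹ ^ #(P.filter fun i => x i < 2) * ∏ i ∈ P, x i ^ e i :=
  calc ∏ i ∈ P, ((e i : ℝ) + 1)
      ≤ ∏ i ∈ P, (if x i < 2 then max 1 s⁻¹ else 1) * x i ^ e i := by
        refine prod_le_prod (fun i _ => by positivity) fun i hi => ?_
        split_ifs with h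
        · exact natCast_add_one_le_mul_pow hs (hx i hi) (e i)
        · rw [one_mul]; exact natCast_add_one_le_pow_of_two_le (not_lt.mp h) (e i)
    _ = max 1 s⁻¹ ^ #(P.filter fun i => x i < 2) * ∏ i ∈ P, x i ^ e i := by
        rw [prod_mul_distrib, prod_ite, prod_const, prod_const_one, mul_one]

theorem pow_lt_ceil_two_rpow_inv {ε : ℝ} (hε : 0 < ε) {q d : ℕ} (h : ((q : ℝ) ^ ε) ^ d < 2) :
    q ^ d < ⌈(2 : ℝ) ^ ε⁻¹⌉₊ := by
  rw [Real.rpow_pow_comm q.cast_nonneg, ← Real.lt_rpow_inv_iff_of_pos (by positivity)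
    zero_le_two hε] at h
  exact_mod_cast h.trans_le (Nat.le_ceil _)

section Polynomial

variable {F : Type*} [Field F]

theorem natDegree_eq_sum_count_mul_natDegree {f : F[X]} (hf : f ≠ 0) :
    f.natDegree = ∑ p ∈ (normalizedFactors f).toFinset,
      (normalizedFactors f).count p * p.natDegree := by
  rw [← natDegree_eq_of_degree_eq (degree_normalize (p := f)), ← prod_normalizedFactors_eq hf,
    natDegree_multiset_prod _ (zero_notMem_normalizedFactors f), sum_multiset_map_count]
  simp only [smul_eq_mul]

theorem prod_pow_natDegree_pow_count {M : Type*} [CommMonoid M] (a : M) {f : F[X]} (hf : f ≠ 0) :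
    ∏ p ∈ (normalizedFactors f).toFinset, (a ^ p.natDegree) ^ (normalizedFactors f).count p =
      a ^ f.natDegree := by
  simp only [← pow_mul, mul_comm _ ((normalizedFactors f).count _), prod_pow_eq_pow_sum,
    ← natDegree_eq_sum_count_mul_natDegree hf]

theorem card_le_of_forall_natDegree_lt [Fintype F] (S : Finset F[X]) (N : ℕ)
    (hS : ∀ p ∈ S, p.natDegree < N) : #S ≤ Fintype.card F ^ N :=
  calc #S ≤ #(univ : Finset (Fin N → F)) := by
        refine card_le_card_of_injOn (fun p i => p.coeff i) (fun _ _ => mem_coe.2 (mem_univ _)) ?_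
        intro p hp r hr hpr
        ext n
        by_cases hn : n < N
        · exact congrFun hpr ⟨n, hn⟩
        · rw [coeff_eq_zero_of_natDegree_lt ((hS p hp).trans_le (not_lt.mp hn)),
            coeff_eq_zero_of_natDegree_lt ((hS r hr).trans_le (not_lt.mp hn))]
    _ = Fintype.card F ^ N := by rw [card_univ, Fintype.card_fun, Fintype.card_fin]

/-- Such polynomials have `q < N` and degree `< N`, so they lie among the `q ^ N` polynomials of
degree `< N`. -/
theorem card_filter_card_pow_natDegree_lt_le [Fintype F] (S : Finset F[X]) (N : ℕ)
    (hS : ∀ p ∈ S, 0 < p.natDegree) :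
    #(S.filter fun p => Fintype.card F ^ p.natDegree < N) ≤ N ^ N := by
  set q := Fintype.card F
  rcases (S.filter fun p => q ^ p.natDegree < N).eq_empty_or_nonempty with hempty | ⟨p₀, hp₀⟩
  · simp [hempty]
  obtain ⟨hp₀S, hp₀N⟩ := mem_filter.mp hp₀
  have hq : q ≤ N := (Nat.le_self_pow (hS p₀ hp₀S).ne' q).trans hp₀N.le
  have hdeg : ∀ p ∈ S.filter fun p => q ^ p.natDegree < N, p.natDegree < N := by
    intro p hp
    calc p.natDegree < 2 ^ p.natDegree := Nat.lt_two_pow_self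
      _ ≤ q ^ p.natDegree := Nat.pow_le_pow_left Fintype.one_lt_card _
      _ < N := (mem_filter.mp hp).2
  exact (card_le_of_forall_natDegree_lt _ N hdeg).trans (Nat.pow_le_pow_left hq N)

end Polynomial

theorem tauPoly_le_prod_count_add_one {F : Type} [Field F] {f : F[X]} (hf : f ≠ 0) :
    tauPoly f ≤ ∏ p ∈ (normalizedFactors f).toFinset, ((normalizedFactors f).count p + 1) := by
  set P := (normalizedFactors f).toFinset
  have hcount : ∀ g : {g : F[X] // g.Monic ∧ g ∣ f}, ∀ r,
      (normalizedFactors g.1).count r ≤ (normalizedFactors f).count r := fun g =>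
    Multiset.le_iff_count.mp
      ((dvd_iff_normalizedFactors_le_normalizedFactors g.2.1.ne_zero hf).mp g.2.2)
  let Φ (g : {g : F[X] // g.Monic ∧ g ∣ f}) (p : P) : Fin ((normalizedFactors f).count p.1 + 1) :=
    ⟨(normalizedFactors g.1).count p.1, Nat.lt_succ_of_le (hcount g p.1)⟩
  have hΦ : Function.Injective Φ := by
    intro g₁ g₂ h
    have hfactors : normalizedFactors g₁.1 = normalizedFactors g₂.1 := by
      ext r
      by_cases hr : r ∈ P
      · exact congrArg Fin.val (congrFun h ⟨r, hr⟩)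
      · have hr0 : (normalizedFactors f).count r = 0 :=
          Multiset.count_eq_zero.mpr (mt Multiset.mem_toFinset.mpr hr)
        have h₁ := hcount g₁ r
        have h₂ := hcount g₂ r
        omega
    have hprod : ∀ g : {g : F[X] // g.Monic ∧ g ∣ f}, (normalizedFactors g.1).prod = g.1 :=
      fun g => (prod_normalizedFactors_eq g.2.1.ne_zero).trans g.2.1.normalize_eq_self
    exact Subtype.ext ((hprod g₁).symm.trans (hfactors ▸ hprod g₂))
  calc tauPoly f ≤ Nat.card (∀ p : P, Fin ((normalizedFactors f).count p.1 + 1)) :=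
        Nat.card_le_card_of_injective Φ hΦ
    _ = ∏ p ∈ P, ((normalizedFactors f).count p + 1) := by
        rw [Nat.card_eq_fintype_card, Fintype.card_pi]
        simp only [Fintype.card_fin]
        exact prod_attach P fun p => (normalizedFactors f).count p + 1

/-- the divisor bound `τ(f) ≤ C(ε) |f|^ε`, with the constant
depending only on `ε` (in particular independent of `q`). -/
theorem stmt_3 :
    ∀ ε : ℝ, 0 < ε → ∃ C : ℝ, 0 < C ∧
      ∀ (Fq : Type) [Field Fq] [Fintype Fq] (f : Polynomial Fq), f ≠ 0 →
        (tauPoly f : ℝ) ≤ C * (((Fintype.card Fq : ℝ) ^ f.natDegree) ^ ε) := by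
  intro ε hε
  set s : ℝ := 2 ^ ε - 1
  have hs : 0 < s := sub_pos.mpr (Real.one_lt_rpow one_lt_two hε)
  set N := ⌈(2 : ℝ) ^ ε⁻¹⌉₊
  refine ⟨max 1 s⁻¹ ^ N ^ N, by positivity, fun Fq _ _ f hf => ?_⟩
  set q := Fintype.card Fq
  set P := (normalizedFactors f).toFinset
  have hq : (2 : ℝ) ≤ q := by exact_mod_cast Fintype.one_lt_card (α := Fq)
  have hdeg : ∀ p ∈ P, 0 < p.natDegree := fun p hp =>
    (irreducible_of_normalized_factor p (Multiset.mem_toFinset.mp hp)).natDegree_pos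
  have hx : ∀ p ∈ P, 1 + s ≤ ((q : ℝ) ^ ε) ^ p.natDegree := fun p hp =>
    calc 1 + s = 2 ^ ε := add_sub_cancel _ _
      _ ≤ (q : ℝ) ^ ε := by gcongr
      _ ≤ ((q : ℝ) ^ ε) ^ p.natDegree :=
        le_self_pow₀ (Real.one_le_rpow (by linarith) hε.le) (hdeg p hp).ne'
  have hsmall : P.filter (fun p => ((q : ℝ) ^ ε) ^ p.natDegree < 2) ⊆
      P.filter (fun p => q ^ p.natDegree < N) :=
    monotone_filter_right P fun _ _ => pow_lt_ceil_two_rpow_inv hε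
  calc (tauPoly f : ℝ) ≤ ∏ p ∈ P, (((normalizedFactors f).count p : ℝ) + 1) := by
        exact_mod_cast tauPoly_le_prod_count_add_one hf
    _ ≤ max 1 s⁻¹ ^ #(P.filter fun p => ((q : ℝ) ^ ε) ^ p.natDegree < 2) *
          ∏ p ∈ P, (((q : ℝ) ^ ε) ^ p.natDegree) ^ (normalizedFactors f).count p :=
        prod_natCast_add_one_le P _ _ hs hx
    _ ≤ max 1 s⁻¹ ^ N ^ N * ((q : ℝ) ^ ε) ^ f.natDegree := by
        rw [prod_pow_natDegree_pow_count _ hf]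
        gcongr
        · exact le_max_left _ _
        · exact (card_le_card hsmall).trans (card_filter_card_pow_natDegree_lt_le P N hdeg)
    _ = max 1 s⁻¹ ^ N ^ N * ((q : ℝ) ^ f.natDegree) ^ ε := by
        rw [Real.rpow_pow_comm (by positivity)]
end
end

section
/- For any nonzero polynomial d ∈ F_q[t] and any y > 0, the number of monic k-full polynomials r ∈ F_q[t] with |r| ≤ y is O(y^{1/k}); in particular the number of monic cube-full (3-full) polynomials of norm at most q^Y is O(q^{Y/3}), with implied constant independent of q. -/
open scoped Classical
open Polynomial

noncomputable section

/-- A monic polynomial `r` is `k`-full if `ϖ ∣ r` implies `ϖ^k ∣ r` for every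
monic irreducible `ϖ`. -/
def IsKFull {Fq : Type} [Field Fq] (k : ℕ) (r : Polynomial Fq) : Prop :=
  ∀ ϖ : Polynomial Fq, ϖ.Monic → Irreducible ϖ → ϖ ∣ r → ϖ ^ k ∣ r

/-!
A monic `k`-full `r` factors as `a ^ k * ∏_{i < k-1} c_i ^ (k+1+i)` with `a` and all `c_i`
monic: write each prime exponent `e ≥ k` as `k * a + b` with `b = 0` or `k < b < 2k`. So it
suffices to count such tuples with `k deg a + Σ (k+1+i) deg c_i ≤ Y`. Put `t = q^(1/k)`. For
fixed `c` the monic `a` form a geometric series dominated by its top term, at most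
`2 t^(Y - w)` with `w` the weight of `c`; each `c_i` of degree `m` then costs
`q^m t^(-(k+1+i)m) ≤ t^(-m)`, and summing over `m` gives a factor
`(1 - t⁻¹)⁻¹ ≤ (1 - 2^(-1/k))⁻¹`, which depends on `k` only since `q ≥ 2`.
-/

open Finset UniqueFactorizationMonoid

lemma exists_eq_mul_or_eq_mul_add {k e : ℕ} (hk : 1 ≤ k) (he : k ≤ e) :
    ∃ a, e = k * a ∨ ∃ i < k - 1, e = k * a + (k + 1 + i) := by
  have hdiv := Nat.div_add_mod e k
  have hmod := Nat.mod_lt e (show 0 < k by omega)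
  have hq : 1 ≤ e / k := (Nat.one_le_div_iff (by omega)).mpr he
  rcases Nat.eq_zero_or_pos (e % k) with h0 | hpos
  · exact ⟨e / k, Or.inl (by omega)⟩
  · refine ⟨e / k - 1, Or.inr ⟨e % k - 1, by omega, ?_⟩⟩
    rw [Nat.mul_sub_one]
    have : k ≤ k * (e / k) := Nat.le_mul_of_pos_right k hq
    omega

def kFullProduct {R : Type*} [CommSemiring R] (k : ℕ) (a : R[X]) (c : Fin (k - 1) → R[X]) :
    R[X] :=
  a ^ k * ∏ i, c i ^ (k + 1 + (i : ℕ))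

def kFullWeight (k : ℕ) (dm : ℕ × (Fin (k - 1) → ℕ)) : ℕ :=
  k * dm.1 + ∑ i : Fin (k - 1), (k + 1 + (i : ℕ)) * dm.2 i

section kFullProduct

variable {R : Type*} [CommSemiring R] {k : ℕ}

lemma kFullProduct_mul (a a' : R[X]) (c c' : Fin (k - 1) → R[X]) :
    kFullProduct k (a * a') (c * c') = kFullProduct k a c * kFullProduct k a' c' := by
  simp only [kFullProduct, Pi.mul_apply, mul_pow, prod_mul_distrib]
  ring

lemma natDegree_kFullProduct [Nontrivial R] {a : R[X]} {c : Fin (k - 1) → R[X]} (ha : a.Monic)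
    (hc : ∀ i, (c i).Monic) :
    (kFullProduct k a c).natDegree = kFullWeight k (a.natDegree, fun i => (c i).natDegree) := by
  rw [kFullProduct, (ha.pow k).natDegree_mul (monic_prod_of_monic _ _ fun i _ => (hc i).pow _),
    ha.natDegree_pow, natDegree_prod_of_monic _ _ fun i _ => (hc i).pow _]
  simp only [kFullWeight, (hc _).natDegree_pow]

def IsKFullProduct (k : ℕ) (r : R[X]) : Prop :=
  ∃ a c, a.Monic ∧ (∀ i, (c i).Monic) ∧ kFullProduct k a c = r

lemma isKFullProduct_pow {e : ℕ} (hk : 1 ≤ k) (he : k ≤ e) {ϖ : R[X]} (hϖ : ϖ.Monic) :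
    IsKFullProduct k (ϖ ^ e) := by
  obtain ⟨a, rfl | ⟨i, hi, rfl⟩⟩ := exists_eq_mul_or_eq_mul_add hk he
  · refine ⟨ϖ ^ a, 1, hϖ.pow a, fun _ => monic_one, ?_⟩
    simp [kFullProduct, pow_mul']
  · refine ⟨ϖ ^ a, fun j => if j = ⟨i, hi⟩ then ϖ else 1, hϖ.pow a,
      fun j => by dsimp only; split_ifs <;> simp [hϖ], ?_⟩
    simp [kFullProduct, ite_pow, pow_add, pow_mul']

end kFullProduct

section Field

variable {F : Type} [Field F] {k : ℕ}

lemma IsKFull.le_count_normalizedFactors {r ϖ : F[X]} (hr : r ≠ 0) (hfull : IsKFull k r)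
    (hϖ : ϖ ∈ normalizedFactors r) : k ≤ (normalizedFactors r).count ϖ := by
  obtain ⟨hirr, hmonic, hdvd⟩ := (Polynomial.mem_normalizedFactors_iff hr).mp hϖ
  have hpow := hfull ϖ hmonic hirr hdvd
  rwa [pow_dvd_iff_le_emultiplicity, emultiplicity_eq_count_normalizedFactors hirr hr,
    hmonic.normalize_eq_self, Nat.cast_le] at hpow

lemma isKFullProduct_of_isKFull (hk : 1 ≤ k) {r : F[X]} (hr : r.Monic)
    (hfull : IsKFull k r) : IsKFullProduct k r := by
  have hr_eq :
      ∏ ϖ ∈ (normalizedFactors r).toFinset, ϖ ^ (normalizedFactors r).count ϖ = r := by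
    rw [← prod_multiset_count, prod_normalizedFactors_eq hr.ne_zero, hr.normalize_eq_self]
  rw [← hr_eq]
  refine prod_induction _ _ ?_ ⟨1, 1, monic_one, fun _ => monic_one, by simp [kFullProduct]⟩ ?_
  · rintro _ _ ⟨a, c, ha, hc, rfl⟩ ⟨a', c', ha', hc', rfl⟩
    exact ⟨a * a', c * c', ha.mul ha', fun i => (hc i).mul (hc' i), kFullProduct_mul a a' c c'⟩
  · intro ϖ hϖ
    rw [Multiset.mem_toFinset] at hϖ
    exact isKFullProduct_pow hk (hfull.le_count_normalizedFactors hr.ne_zero hϖ)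
      ((Polynomial.mem_normalizedFactors_iff hr.ne_zero).mp hϖ).2.1

end Field

section Counting

variable (F : Type) [Field F] [Fintype F]

def monicOfDegree (n : ℕ) : Finset F[X] :=
  univ.image fun f : Fin n → F => X ^ n + ∑ i : Fin n, C (f i) * X ^ (i : ℕ)

variable {F}

lemma Polynomial.Monic.mem_monicOfDegree {p : F[X]} (hp : p.Monic) :
    p ∈ monicOfDegree F p.natDegree :=
  mem_image.mpr ⟨fun i => p.coeff i, mem_univ _, by
    rw [Fin.sum_univ_eq_sum_range (fun i => C (p.coeff i) * X ^ i), ← hp.as_sum]⟩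

lemma card_monicOfDegree_le (n : ℕ) : #(monicOfDegree F n) ≤ Fintype.card F ^ n :=
  card_image_le.trans (by simp)

end Counting

def kFullDegrees (k Y : ℕ) : Finset (ℕ × (Fin (k - 1) → ℕ)) :=
  {dm ∈ range (Y + 1) ×ˢ Fintype.piFinset fun _ => range (Y + 1) | kFullWeight k dm ≤ Y}

lemma mem_kFullDegrees {k Y : ℕ} (hk : 1 ≤ k) {dm : ℕ × (Fin (k - 1) → ℕ)} :
    dm ∈ kFullDegrees k Y ↔ kFullWeight k dm ≤ Y := by
  refine ⟨fun h => (mem_filter.mp h).2, fun h => mem_filter.mpr ⟨?_, h⟩⟩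
  have hi : ∀ i, dm.2 i ≤ kFullWeight k dm := fun i =>
    calc dm.2 i ≤ (k + 1 + (i : ℕ)) * dm.2 i := Nat.le_mul_of_pos_left _ (by omega)
      _ ≤ ∑ j : Fin (k - 1), (k + 1 + (j : ℕ)) * dm.2 j :=
        single_le_sum (f := fun j : Fin (k - 1) => (k + 1 + (j : ℕ)) * dm.2 j) (by simp)
          (mem_univ i)
      _ ≤ kFullWeight k dm := Nat.le_add_left _ _
  have h1 : dm.1 ≤ kFullWeight k dm :=
    (Nat.le_mul_of_pos_left _ (by omega)).trans (Nat.le_add_right _ _)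
  simp only [mem_product, mem_range, Fintype.mem_piFinset]
  exact ⟨by omega, fun i => by have := hi i; omega⟩

lemma card_isKFull_le {F : Type} [Field F] [Fintype F] {k : ℕ} (hk : 1 ≤ k) (Y : ℕ) :
    Nat.card {r : F[X] // r.Monic ∧ IsKFull k r ∧ r.natDegree ≤ Y} ≤
      ∑ dm ∈ kFullDegrees k Y, Fintype.card F ^ (dm.1 + ∑ i, dm.2 i) := by
  let tuples : Finset (F[X] × (Fin (k - 1) → F[X])) := (kFullDegrees k Y).biUnion fun dm =>
    monicOfDegree F dm.1 ×ˢ Fintype.piFinset fun i => monicOfDegree F (dm.2 i)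
  have hsub : {r : F[X] | r.Monic ∧ IsKFull k r ∧ r.natDegree ≤ Y} ⊆
      tuples.image fun ac => kFullProduct k ac.1 ac.2 := by
    rintro r ⟨hr, hfull, hY⟩
    obtain ⟨a, c, ha, hc, rfl⟩ := isKFullProduct_of_isKFull hk hr hfull
    refine mem_image.mpr
      ⟨(a, c), mem_biUnion.mpr ⟨(a.natDegree, fun i => (c i).natDegree), ?_, ?_⟩, rfl⟩
    · rwa [mem_kFullDegrees hk, ← natDegree_kFullProduct ha hc]
    · exact mem_product.mpr
        ⟨ha.mem_monicOfDegree, Fintype.mem_piFinset.mpr fun i => (hc i).mem_monicOfDegree⟩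
  calc Nat.card {r : F[X] // r.Monic ∧ IsKFull k r ∧ r.natDegree ≤ Y}
      ≤ #(tuples.image fun ac => kFullProduct k ac.1 ac.2) := by
        rw [← Set.ncard_coe_finset, ← Nat.card_coe_set_eq]
        exact Set.ncard_le_ncard hsub (finite_toSet _)
    _ ≤ #tuples := card_image_le
    _ ≤ _ := card_biUnion_le
    _ ≤ _ := sum_le_sum fun dm _ => by
        rw [card_product, Fintype.card_piFinset, pow_add, ← prod_pow_eq_pow_sum]
        gcongr <;> exact card_monicOfDegree_le _

lemma geom_sum_range_succ_le_two_mul_pow {x : ℝ} (hx : 2 ≤ x) (n : ℕ) :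
    ∑ d ∈ range (n + 1), x ^ d ≤ 2 * x ^ n := by
  induction n with
  | zero => norm_num
  | succ n ih =>
    rw [sum_range_succ, pow_succ]
    nlinarith [pow_nonneg (zero_le_two.trans hx) n]

section Estimates

variable {k : ℕ} {t : ℝ}

lemma sum_pow_pow_le_two_mul_pow_sub (hk : 1 ≤ k) (ht : 1 < t) (htk : 2 ≤ t ^ k) (w Y : ℕ) :
    ∑ d ∈ range (Y + 1) with k * d + w ≤ Y, (t ^ k) ^ d ≤ 2 * t ^ (Y - w) := by
  have hsub : {d ∈ range (Y + 1) | k * d + w ≤ Y} ⊆ range ((Y - w) / k + 1) := fun d hd => by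
    rw [mem_range, Nat.lt_succ_iff, Nat.le_div_iff_mul_le (by omega)]
    have := (mem_filter.mp hd).2
    rw [mul_comm]; omega
  calc ∑ d ∈ range (Y + 1) with k * d + w ≤ Y, (t ^ k) ^ d
      ≤ ∑ d ∈ range ((Y - w) / k + 1), (t ^ k) ^ d :=
        sum_le_sum_of_subset_of_nonneg hsub fun _ _ _ => by positivity
    _ ≤ 2 * (t ^ k) ^ ((Y - w) / k) := geom_sum_range_succ_le_two_mul_pow htk _
    _ ≤ 2 * t ^ (Y - w) := by
        rw [← pow_mul]
        gcongr
        · exact ht.le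
        · exact Nat.mul_div_le _ _

lemma sum_filter_kFullWeight_le (hk : 1 ≤ k) (ht : 1 < t) (htk : 2 ≤ t ^ k) (Y : ℕ)
    (m : Fin (k - 1) → ℕ) :
    ∑ d ∈ range (Y + 1) with kFullWeight k (d, m) ≤ Y, (t ^ k) ^ (d + ∑ i, m i)
      ≤ 2 * t ^ Y * t⁻¹ ^ (∑ i, m i) := by
  set w := ∑ i : Fin (k - 1), (k + 1 + (i : ℕ)) * m i
  set s := ∑ i, m i
  have ht0 : 0 < t := zero_lt_one.trans ht
  by_cases hw : w ≤ Y
  swap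
  · rw [sum_eq_zero fun d hd => absurd ((mem_filter.mp hd).2.trans' (Nat.le_add_left _ _)) hw]
    positivity
  have hsw : k * s + s ≤ w := by
    rw [mul_sum, ← sum_add_distrib]
    exact sum_le_sum fun i _ => by nlinarith
  calc ∑ d ∈ range (Y + 1) with kFullWeight k (d, m) ≤ Y, (t ^ k) ^ (d + s)
      = (∑ d ∈ range (Y + 1) with k * d + w ≤ Y, (t ^ k) ^ d) * t ^ (k * s) := by
        rw [sum_mul]
        simp only [kFullWeight, pow_add, pow_mul]
        rfl
    _ ≤ 2 * t ^ (Y - w) * t ^ (k * s) := by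
        gcongr
        exact sum_pow_pow_le_two_mul_pow_sub hk ht htk w Y
    _ = 2 * t ^ (Y - w + k * s) := by ring
    _ ≤ 2 * t ^ (Y - s) := by gcongr; exacts [ht.le, by omega]
    _ = 2 * t ^ Y * t⁻¹ ^ s := by
        rw [pow_sub₀ _ ht0.ne' (by omega), inv_pow]; ring

lemma sum_kFullDegrees_le (hk : 1 ≤ k) (ht : 1 < t) (htk : 2 ≤ t ^ k) (Y : ℕ) :
    ∑ dm ∈ kFullDegrees k Y, (t ^ k) ^ (dm.1 + ∑ i, dm.2 i)
      ≤ 2 * (1 - t⁻¹)⁻¹ ^ (k - 1) * t ^ Y := by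
  have ht0 : 0 < t := zero_lt_one.trans ht
  rw [kFullDegrees, sum_filter, sum_product, sum_comm]
  simp_rw [← sum_filter]
  calc ∑ m ∈ Fintype.piFinset (fun _ => range (Y + 1)),
        ∑ d ∈ range (Y + 1) with kFullWeight k (d, m) ≤ Y, (t ^ k) ^ (d + ∑ i, m i)
      ≤ ∑ m ∈ Fintype.piFinset (fun _ => range (Y + 1)), 2 * t ^ Y * t⁻¹ ^ (∑ i, m i) :=
        sum_le_sum fun m _ => sum_filter_kFullWeight_le hk ht htk Y m
    _ = 2 * t ^ Y * ∏ _i : Fin (k - 1), ∑ j ∈ range (Y + 1), t⁻¹ ^ j := by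
        simp only [← mul_sum, prod_univ_sum, prod_pow_eq_pow_sum]
    _ ≤ 2 * t ^ Y * ∏ _i : Fin (k - 1), (1 - t⁻¹)⁻¹ := by
        refine mul_le_mul_of_nonneg_left (prod_le_prod (fun _ _ => by positivity) fun _ _ => ?_)
          (by positivity)
        simpa [← range_eq_Ico] using geom_sum_Ico_le_of_lt_one (m := 0) (n := Y + 1)
          (inv_nonneg.mpr ht0.le) (inv_lt_one_of_one_lt₀ ht)
    _ = 2 * (1 - t⁻¹)⁻¹ ^ (k - 1) * t ^ Y := by
        rw [prod_const, card_univ, Fintype.card_fin]; ring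

end Estimates

lemma card_isKFull_le_mul_rpow {F : Type} [Field F] [Fintype F] {k : ℕ} (hk : 1 ≤ k) (Y : ℕ) :
    (Nat.card {r : F[X] // r.Monic ∧ IsKFull k r ∧ r.natDegree ≤ Y} : ℝ) ≤
      2 * (1 - (1 / 2 : ℝ) ^ ((1 : ℝ) / k))⁻¹ ^ (k - 1) *
        ((Fintype.card F : ℝ) ^ Y) ^ ((1 : ℝ) / k) := by
  have hq : (2 : ℝ) ≤ Fintype.card F := by
    have : 2 ≤ Fintype.card F := Fintype.one_lt_card
    exact_mod_cast this
  have htk : ((Fintype.card F : ℝ) ^ ((1 : ℝ) / k)) ^ k = Fintype.card F := by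
    rw [one_div]; exact Real.rpow_inv_natCast_pow (by positivity) (by omega)
  set t := (Fintype.card F : ℝ) ^ ((1 : ℝ) / k)
  have ht : 1 < t := Real.one_lt_rpow (by linarith) (by positivity)
  have htu : t⁻¹ ≤ (1 / 2 : ℝ) ^ ((1 : ℝ) / k) := by
    rw [← Real.inv_rpow (by positivity)]
    exact Real.rpow_le_rpow (by positivity) (by rw [one_div]; exact inv_anti₀ two_pos hq)
      (by positivity)
  calc (Nat.card {r : F[X] // r.Monic ∧ IsKFull k r ∧ r.natDegree ≤ Y} : ℝ)
      ≤ ∑ dm ∈ kFullDegrees k Y, (Fintype.card F : ℝ) ^ (dm.1 + ∑ i, dm.2 i) := by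
        exact_mod_cast card_isKFull_le hk Y
    _ ≤ 2 * (1 - t⁻¹)⁻¹ ^ (k - 1) * t ^ Y := by
        rw [← htk]; exact sum_kFullDegrees_le hk ht (htk ▸ hq) Y
    _ ≤ 2 * (1 - (1 / 2 : ℝ) ^ ((1 : ℝ) / k))⁻¹ ^ (k - 1) * t ^ Y := by
        have : (1 / 2 : ℝ) ^ ((1 : ℝ) / k) < 1 :=
          Real.rpow_lt_one (by norm_num) (by norm_num) (by positivity)
        have := sub_pos.mpr this
        have := sub_pos.mpr (inv_lt_one_of_one_lt₀ ht)
        gcongr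
    _ = _ := by rw [Real.rpow_pow_comm (by positivity)]

/-- the number of monic `k`-full polynomials of norm at most `q^Y`
is `O(q^{Y/k})`, with constant independent of `q`. -/
theorem stmt_13 (k : ℕ) (hk : 1 ≤ k) : ∃ C : ℝ, 0 < C ∧
    ∀ (Fq : Type) [Field Fq] [Fintype Fq] (d : Polynomial Fq), d ≠ 0 →
      ∀ Y : ℕ,
        (Nat.card {r : Polynomial Fq // r.Monic ∧ IsKFull k r ∧ r.natDegree ≤ Y} : ℝ)
          ≤ C * ((Fintype.card Fq : ℝ) ^ Y) ^ ((1 : ℝ) / k) := by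
  have hu : (1 / 2 : ℝ) ^ ((1 : ℝ) / k) < 1 :=
    Real.rpow_lt_one (by norm_num) (by norm_num) (by positivity)
  have := sub_pos.mpr hu
  exact ⟨_, by positivity, fun Fq _ _ _ _ Y => card_isKFull_le_mul_rpow hk Y⟩
end
end

section
/- The singular integral 𝔍 = ∫_{|φ|<q³} ∫_{K_∞^n} w(tu − b) ψ(φF(u)) du dφ, where w is the indicator of the unit ball {|x| < 1}, F is a non-singular cubic form over F_q (char > 3, n ≥ 10), b ∈ F_q^n with F(b) = 0 and nonvanishing Hessian determinant at b, equals q^{-(n-3)}. -/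
/-!
Write `X = t⁻¹`. On the box `|tu - b| < 1` we have `u = X (b + z)` with all `|zᵢ| < 1`, so by
homogeneity `F(u) = X³ F(b + z)`, and `F(b + z) ≡ F(b) = 0` modulo the maximal ideal of the
valuation ring. Hence `|F(u)| ≤ q⁻⁴`, `|φ F(u)| ≤ q⁻²` for `|φ| < q³`, and `ψ(φ F(u)) = 1` on the
whole domain: the integral is the product of the volumes `q³` and `q⁻ⁿ`.

The measure is only known to be translation invariant with the right values on balls, so balls
need not be measurable. They are null-measurable: a ball of radius `q^(-M)` is the disjoint union of
`q^(m - M)` balls of radius `q^(-m)` whose measures add up to its own, which forces the measurable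
hulls of two distinct cosets of a ball to be almost disjoint, and the complement of a coset is a
countable union of such cosets.
-/

open scoped Classical BigOperators
open MeasureTheory Polynomial

noncomputable section

abbrev Kinf (Fq : Type) [Field Fq] := LaurentSeries Fq

def tvar (Fq : Type) [Field Fq] : Kinf Fq := HahnSeries.single (-1 : ℤ) 1

def absK {Fq : Type} [Field Fq] [Fintype Fq] (f : Kinf Fq) : ℝ :=
  if f = 0 then 0 else (Fintype.card Fq : ℝ) ^ (-(f.order))

def polyK {Fq : Type} [Field Fq] (f : Polynomial Fq) : Kinf Fq :=
  Polynomial.aeval (tvar Fq) f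

def psiK {Fq : Type} [Field Fq] [Fintype Fq] [Algebra (ZMod (ringChar Fq)) Fq]
    (f : Kinf Fq) : ℂ :=
  Complex.exp (2 * Real.pi * Complex.I *
    ((Algebra.trace (ZMod (ringChar Fq)) Fq (f.coeff 1)).val : ℂ) / (ringChar Fq : ℂ))

/-- A form is non-singular if, over the algebraic closure, the only common zero of
its partial derivatives is the origin. -/
def NonsingularForm {Fq : Type} [Field Fq] {n : ℕ}
    (F : MvPolynomial (Fin n) Fq) : Prop :=
  ∀ x : Fin n → AlgebraicClosure Fq,
    (∀ i, MvPolynomial.aeval x (MvPolynomial.pderiv i F) = 0) → x = 0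

/-- The determinant of the Hessian matrix of a multivariate polynomial. -/
def hessianDet {Fq : Type} [Field Fq] {n : ℕ} (F : MvPolynomial (Fin n) Fq) :
    MvPolynomial (Fin n) Fq :=
  Matrix.det (Matrix.of fun i j => MvPolynomial.pderiv i (MvPolynomial.pderiv j F))

open scoped ENNReal Pointwise

namespace MeasureTheory

variable {α : Type*} [MeasurableSpace α] {μ : Measure α}

theorem measure_iUnion_add_measure_inter_le_sum {ι : Type*} [Fintype ι] {P : ι → Set α}
    {i j : ι} (hij : i ≠ j) (hj : MeasurableSet (P j)) :
    μ (⋃ e, P e) + μ (P i ∩ P j) ≤ ∑ e, μ (P e) := by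
  classical
  have hcover : (⋃ e, P e) ⊆ (P i \ P j) ∪ ⋃ e ∈ Finset.univ.erase i, P e := by
    refine Set.iUnion_subset fun e x hx => ?_
    by_cases he : e = i
    · subst he
      by_cases hxj : x ∈ P j
      · exact Or.inr (Set.mem_biUnion (Finset.mem_erase.mpr ⟨hij.symm, Finset.mem_univ _⟩) hxj)
      · exact Or.inl ⟨hx, hxj⟩
    · exact Or.inr (Set.mem_biUnion (Finset.mem_erase.mpr ⟨he, Finset.mem_univ _⟩) hx)
  calc μ (⋃ e, P e) + μ (P i ∩ P j)
      ≤ μ (P i \ P j) + ∑ e ∈ Finset.univ.erase i, μ (P e) + μ (P i ∩ P j) := by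
        gcongr
        exact (measure_mono hcover).trans
          ((measure_union_le _ _).trans (by gcongr; exact measure_biUnion_finset_le _ _))
    _ = μ (P i) + ∑ e ∈ Finset.univ.erase i, μ (P e) := by
        rw [← measure_sdiff_add_inter (P i) hj]; ring
    _ = ∑ e, μ (P e) := Finset.add_sum_erase _ (fun e => μ (P e)) (Finset.mem_univ i)

theorem measure_toMeasurable_inter_eq_zero_of_sum_le {ι : Type*} [Fintype ι] {A : ι → Set α}
    (hsum : ∑ e, μ (A e) ≤ μ (⋃ e, A e)) (hfin : μ (⋃ e, A e) ≠ ∞) {i j : ι} (hij : i ≠ j) :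
    μ (toMeasurable μ (A i) ∩ toMeasurable μ (A j)) = 0 := by
  have key := measure_iUnion_add_measure_inter_le_sum (μ := μ)
    (P := fun e => toMeasurable μ (A e)) hij (measurableSet_toMeasurable _ _)
  simp only [measure_toMeasurable] at key
  refine le_antisymm (ENNReal.le_of_add_le_add_left hfin ?_) zero_le
  calc μ (⋃ e, A e) + μ (toMeasurable μ (A i) ∩ toMeasurable μ (A j))
      ≤ μ (⋃ e, toMeasurable μ (A e)) + μ (toMeasurable μ (A i) ∩ toMeasurable μ (A j)) := by
        gcongr with e
        exact subset_toMeasurable μ (A e)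
    _ ≤ μ (⋃ e, A e) + 0 := by rw [add_zero]; exact key.trans hsum

theorem nullMeasurableSet_of_measure_toMeasurable_inter {ι : Type*} [Countable ι] {s : Set α}
    (A : ι → Set α) (hcover : sᶜ ⊆ ⋃ i, A i)
    (hnull : ∀ i, μ (toMeasurable μ s ∩ toMeasurable μ (A i)) = 0) :
    NullMeasurableSet s μ := by
  refine (measurableSet_toMeasurable μ s).nullMeasurableSet.congr (ae_eq_set.mpr ⟨?_, ?_⟩)
  · refine measure_mono_null (fun x hx => ?_) (measure_iUnion_null hnull)
    obtain ⟨i, hi⟩ := Set.mem_iUnion.mp (hcover hx.2)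
    exact Set.mem_iUnion.mpr ⟨i, hx.1, subset_toMeasurable μ (A i) hi⟩
  · rw [Set.sdiff_eq_empty.mpr (subset_toMeasurable μ s), measure_empty]

theorem NullMeasurableSet.univ_pi {ι : Type*} [Fintype ι] {β : ι → Type*}
    [∀ i, MeasurableSpace (β i)] {ν : ∀ i, Measure (β i)} [∀ i, SigmaFinite (ν i)]
    {s : ∀ i, Set (β i)} (hs : ∀ i, NullMeasurableSet (s i) (ν i)) :
    NullMeasurableSet (Set.univ.pi s) (Measure.pi ν) :=
  (MeasurableSet.univ_pi fun i => measurableSet_toMeasurable (ν i) (s i)).nullMeasurableSet.congr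
    (Measure.ae_eq_set_pi fun i _ => (hs i).toMeasurable_ae_eq)

end MeasureTheory

theorem MvPolynomial.IsHomogeneous.aeval_const_mul {R A σ : Type*} [CommSemiring R]
    [CommSemiring A] [Algebra R A] {F : MvPolynomial σ R} {d : ℕ} (hF : F.IsHomogeneous d)
    (r : A) (v : σ → A) :
    MvPolynomial.aeval (fun i => r * v i) F = r ^ d * MvPolynomial.aeval v F := by
  rw [MvPolynomial.aeval_def, MvPolynomial.aeval_def, MvPolynomial.eval₂_eq,
    MvPolynomial.eval₂_eq, Finset.mul_sum]
  refine Finset.sum_congr rfl fun s hs => ?_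
  have hdeg : ∑ i ∈ s.support, s i = d := by
    rw [← Finsupp.degree_apply, Finsupp.degree_eq_weight_one]
    exact hF (MvPolynomial.mem_support_iff.mp hs)
  simp_rw [mul_pow, Finset.prod_mul_distrib, Finset.prod_pow_eq_pow_sum, hdeg]
  ring

namespace LaurentSeries

section Ring

variable {R : Type*} [Ring R]

-- Over `𝔽_q` this is the ball `|f| ≤ q^(-m)`, i.e. `|f| < q^(1 - m)` (see `absK_lt_zpow_iff`).
variable (R) in
def vanishBelow (m : ℤ) : AddSubgroup (LaurentSeries R) where
  carrier := {f | ∀ k < m, f.coeff k = 0}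
  add_mem' hf hg k hk := by simp [hf k hk, hg k hk]
  zero_mem' _ _ := rfl
  neg_mem' hf k hk := by simp [hf k hk]

theorem vanishBelow_antitone : Antitone (vanishBelow R) :=
  fun _ _ h _ hf k hk => hf k (hk.trans_le h)

theorem mem_vanishBelow_iff_le_order {m : ℤ} {f : LaurentSeries R} (hf : f ≠ 0) :
    f ∈ vanishBelow R m ↔ m ≤ f.order := by
  refine ⟨fun h => ?_, fun h k hk => HahnSeries.coeff_eq_zero_of_lt_order (hk.trans_le h)⟩
  by_contra! hlt
  exact hf (HahnSeries.coeff_order_eq_zero.mp (h _ hlt))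

theorem exists_mem_vanishBelow (f : LaurentSeries R) (m : ℤ) :
    ∃ M ≤ m, f ∈ vanishBelow R M := by
  refine ⟨min m f.order, min_le_left _ _, fun k hk => ?_⟩
  exact HahnSeries.coeff_eq_zero_of_lt_order (hk.trans_le (min_le_right _ _))

theorem single_one_mul_mem_vanishBelow_iff {a m : ℤ} {f : LaurentSeries R} :
    HahnSeries.single a 1 * f ∈ vanishBelow R m ↔ f ∈ vanishBelow R (m - a) := by
  refine ⟨fun h k hk => ?_, fun h k hk => ?_⟩
  · simpa [HahnSeries.coeff_single_mul_add] using h (k + a) (by omega)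
  · rw [← sub_add_cancel k a, HahnSeries.coeff_single_mul_add, one_mul]
    exact h (k - a) (by omega)

theorem mul_mem_vanishBelow [NoZeroDivisors R] {a b : ℤ} {f g : LaurentSeries R}
    (hf : f ∈ vanishBelow R a) (hg : g ∈ vanishBelow R b) : f * g ∈ vanishBelow R (a + b) := by
  rcases eq_or_ne f 0 with rfl | hf0
  · simp
  rcases eq_or_ne g 0 with rfl | hg0
  · simp
  rw [mem_vanishBelow_iff_le_order hf0] at hf
  rw [mem_vanishBelow_iff_le_order hg0] at hg
  rw [mem_vanishBelow_iff_le_order (mul_ne_zero hf0 hg0), HahnSeries.order_mul hf0 hg0]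
  omega

def windowSeries {M m : ℤ} (e : Finset.Ico M m → R) : LaurentSeries R where
  coeff k := if h : k ∈ Finset.Ico M m then e ⟨k, h⟩ else 0
  isPWO_support' := (Finset.Ico M m).finite_toSet.isPWO.mono fun k hk => by
    by_contra h
    exact hk (dif_neg h)

theorem neg_windowSeries_add_mem {M m : ℤ} {f : LaurentSeries R} (hf : f ∈ vanishBelow R M) :
    -windowSeries (fun k : Finset.Ico M m => f.coeff k) + f ∈ vanishBelow R m := by
  intro k hk
  by_cases h : k ∈ Finset.Ico M m
  · simp [windowSeries, Finset.mem_Ico.mp h]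
  · have hkM : k < M := by simp only [Finset.mem_Ico, not_and, not_lt] at h; omega
    simp [windowSeries, hkM.not_ge, hf k hkM]

theorem subset_iUnion_windowSeries_vadd {M m : ℤ} :
    (vanishBelow R M : Set (LaurentSeries R)) ⊆
      ⋃ e : Finset.Ico M m → R, windowSeries e +ᵥ (vanishBelow R m : Set (LaurentSeries R)) :=
  fun _ hf => Set.mem_iUnion.mpr ⟨_, (mem_leftAddCoset_iff _).mpr (neg_windowSeries_add_mem hf)⟩

end Ring

theorem exists_coe_eq_of_mem_vanishBelow_zero {R : Type*} [CommRing R] {f : LaurentSeries R}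
    (hf : f ∈ vanishBelow R 0) : ∃ W : PowerSeries R, (W : LaurentSeries R) = f := by
  refine ⟨PowerSeries.mk fun n => f.coeff n, HahnSeries.ext (funext fun k => ?_)⟩
  rw [PowerSeries.coeff_coe]
  split_ifs with hk
  · exact (hf k hk).symm
  · simp [Int.natAbs_of_nonneg (not_lt.mp hk)]

theorem aeval_mem_vanishBelow_one {R σ : Type*} [CommRing R] (F : MvPolynomial σ R)
    {w : σ → LaurentSeries R} {b : σ → R}
    (hw : ∀ i, w i - algebraMap R (LaurentSeries R) (b i) ∈ vanishBelow R 1)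
    (hb : MvPolynomial.eval b F = 0) : MvPolynomial.aeval w F ∈ vanishBelow R 1 := by
  have hw₀ : ∀ i, (w i).coeff 0 = b i := fun i => by
    simpa [sub_eq_zero, HahnSeries.algebraMap_apply'] using hw i 0 one_pos
  have hw₁ : ∀ i, w i ∈ vanishBelow R 0 := fun i k hk => by
    simpa [HahnSeries.algebraMap_apply', hk.ne] using hw i k (hk.trans one_pos)
  choose W hW using fun i => exists_coe_eq_of_mem_vanishBelow_zero (hw₁ i)
  have hcoe : MvPolynomial.aeval w F = (MvPolynomial.aeval W F : LaurentSeries R) := by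
    rw [MvPolynomial.map_aeval, ← funext hW]
    rfl
  have hconst : PowerSeries.constantCoeff (MvPolynomial.aeval W F) = 0 := by
    have hWb : (fun i => PowerSeries.constantCoeff (W i)) = b := funext fun i => by
      simpa [← hW i, PowerSeries.coeff_coe] using hw₀ i
    have hid : PowerSeries.constantCoeff.comp (algebraMap R (PowerSeries R)) = RingHom.id R := by
      ext; simp
    rw [MvPolynomial.map_aeval, hWb, hid]
    exact hb
  intro k hk
  rw [hcoe, PowerSeries.coeff_coe]
  split_ifs with hk'
  · rfl
  · obtain rfl : k = 0 := by omega
    simpa using hconst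

end LaurentSeries

open LaurentSeries

section HaarMeasure

variable {Fq : Type} [Field Fq] [Fintype Fq]

theorem absK_lt_zpow_iff {f : Kinf Fq} {N : ℤ} :
    absK f < (Fintype.card Fq : ℝ) ^ N ↔ f ∈ vanishBelow Fq (1 - N) := by
  have hq : (1 : ℝ) < Fintype.card Fq := by exact_mod_cast Fintype.one_lt_card
  rcases eq_or_ne f 0 with rfl | hf
  · simpa [absK] using zpow_pos (zero_lt_one.trans hq) N
  rw [absK, if_neg hf, zpow_lt_zpow_iff_right₀ hq, mem_vanishBelow_iff_le_order hf]
  omega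

variable [MeasurableSpace (Kinf Fq)] {μ : Measure (Kinf Fq)}

theorem measure_vadd_vanishBelow
    (hinv : ∀ a : Kinf Fq, ∀ s : Set (Kinf Fq), μ ((a + ·) ⁻¹' s) = μ s)
    (hball : ∀ N : ℤ, μ {α : Kinf Fq | absK α < (Fintype.card Fq : ℝ) ^ N}
        = ENNReal.ofReal ((Fintype.card Fq : ℝ) ^ N))
    (c : Kinf Fq) (m : ℤ) :
    μ (c +ᵥ (vanishBelow Fq m : Set (Kinf Fq))) =
      ENNReal.ofReal ((Fintype.card Fq : ℝ) ^ (1 - m)) := by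
  have hcoset : c +ᵥ (vanishBelow Fq m : Set (Kinf Fq)) =
      (-c + ·) ⁻¹' {α | absK α < (Fintype.card Fq : ℝ) ^ (1 - m)} := by
    ext y
    simp [mem_leftAddCoset_iff, absK_lt_zpow_iff]
  rw [hcoset, hinv, hball]

theorem measure_toMeasurable_vadd_inter_eq_zero
    (hμ : ∀ (c : Kinf Fq) (m : ℤ), μ (c +ᵥ (vanishBelow Fq m : Set (Kinf Fq))) =
      ENNReal.ofReal ((Fintype.card Fq : ℝ) ^ (1 - m)))
    {m : ℤ} {c c' : Kinf Fq} (hcc' : -c + c' ∉ vanishBelow Fq m) :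
    μ (toMeasurable μ (c +ᵥ (vanishBelow Fq m : Set (Kinf Fq))) ∩
      toMeasurable μ (c' +ᵥ (vanishBelow Fq m : Set (Kinf Fq)))) = 0 := by
  obtain ⟨M₁, hM₁, hc⟩ := exists_mem_vanishBelow c m
  obtain ⟨M₂, hM₂, hc'⟩ := exists_mem_vanishBelow c' m
  set M := min M₁ M₂
  have hcM : c ∈ vanishBelow Fq M := vanishBelow_antitone (min_le_left _ _) hc
  have hc'M : c' ∈ vanishBelow Fq M := vanishBelow_antitone (min_le_right _ _) hc'
  set A : (Finset.Ico M m → Fq) → Set (Kinf Fq) :=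
    fun e => windowSeries e +ᵥ (vanishBelow Fq m : Set (Kinf Fq))
  have hA : ∀ f ∈ vanishBelow Fq M, A (fun k => f.coeff k) = f +ᵥ (vanishBelow Fq m : Set _) :=
    fun f hf => (leftAddCoset_eq_iff _).mpr (neg_windowSeries_add_mem hf)
  have hne : (fun k : Finset.Ico M m => c.coeff k) ≠ fun k : Finset.Ico M m => c'.coeff k := by
    intro h
    apply hcc'
    have := (vanishBelow Fq m).sub_mem (neg_windowSeries_add_mem (m := m) hc'M)
      (neg_windowSeries_add_mem (m := m) hcM)
    rw [← h] at this
    convert this using 1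
    abel
  have hsum : ∑ e, μ (A e) = μ (vanishBelow Fq M : Set (Kinf Fq)) := by
    have hcard : (Fintype.card (Finset.Ico M m → Fq) : ℝ) = (Fintype.card Fq : ℝ) ^ (m - M) := by
      rw [Fintype.card_fun, Fintype.card_coe, Int.card_Ico, Nat.cast_pow,
        ← zpow_natCast, Int.toNat_of_nonneg (by omega)]
    rw [← zero_vadd (Kinf Fq) (vanishBelow Fq M : Set (Kinf Fq)), hμ]
    simp only [A, hμ, Finset.sum_const, Finset.card_univ, nsmul_eq_mul]
    rw [← ENNReal.ofReal_natCast, ← ENNReal.ofReal_mul (Nat.cast_nonneg _), hcard,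
      ← zpow_add₀ (by exact_mod_cast Fintype.card_ne_zero)]
    ring_nf
  have hfin : μ (⋃ e, A e) ≠ ⊤ :=
    ((measure_iUnion_fintype_le μ A).trans_lt
      (ENNReal.sum_lt_top.mpr fun e _ => by simp [A, hμ])).ne
  have := measure_toMeasurable_inter_eq_zero_of_sum_le
    (hsum.trans_le (measure_mono subset_iUnion_windowSeries_vadd)) hfin hne
  rwa [hA c hcM, hA c' hc'M] at this

theorem nullMeasurableSet_vadd_vanishBelow
    (hμ : ∀ (c : Kinf Fq) (m : ℤ), μ (c +ᵥ (vanishBelow Fq m : Set (Kinf Fq))) =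
      ENNReal.ofReal ((Fintype.card Fq : ℝ) ^ (1 - m)))
    (c : Kinf Fq) (m : ℤ) : NullMeasurableSet (c +ᵥ (vanishBelow Fq m : Set (Kinf Fq))) μ := by
  let ι := {p : Σ M : ℤ, Finset.Ico M m → Fq // -c + windowSeries p.2 ∉ vanishBelow Fq m}
  refine nullMeasurableSet_of_measure_toMeasurable_inter
    (fun p : ι => windowSeries p.1.2 +ᵥ (vanishBelow Fq m : Set (Kinf Fq))) (fun x hx => ?_)
    fun p => measure_toMeasurable_vadd_inter_eq_zero hμ p.2
  rw [Set.mem_compl_iff, mem_leftAddCoset_iff] at hx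
  obtain ⟨M, -, hxM⟩ := exists_mem_vanishBelow x m
  have hx' := neg_windowSeries_add_mem (m := m) hxM
  refine Set.mem_iUnion.mpr ⟨⟨⟨M, fun k => x.coeff k⟩, fun h => hx ?_⟩,
    (mem_leftAddCoset_iff _).mpr hx'⟩
  simpa using (vanishBelow Fq m).add_mem h hx'

theorem nullMeasurableSet_setOf_absK_lt
    (hμ : ∀ (c : Kinf Fq) (m : ℤ), μ (c +ᵥ (vanishBelow Fq m : Set (Kinf Fq))) =
      ENNReal.ofReal ((Fintype.card Fq : ℝ) ^ (1 - m)))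
    (N : ℤ) : NullMeasurableSet {α : Kinf Fq | absK α < (Fintype.card Fq : ℝ) ^ N} μ := by
  have hball : {α : Kinf Fq | absK α < (Fintype.card Fq : ℝ) ^ N} =
      (0 : Kinf Fq) +ᵥ (vanishBelow Fq (1 - N) : Set (Kinf Fq)) := by
    ext
    simp [absK_lt_zpow_iff]
  exact hball ▸ nullMeasurableSet_vadd_vanishBelow hμ 0 (1 - N)

end HaarMeasure

section SingularIntegral

variable {Fq : Type} [Field Fq]

theorem tvar_mul_single_one (a : Fq) :
    tvar Fq * HahnSeries.single 1 a = algebraMap Fq (Kinf Fq) a := by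
  rw [tvar, HahnSeries.single_mul_single, one_mul, neg_add_cancel, HahnSeries.algebraMap_apply']
  simp

theorem single_one_mul_tvar_mul (f : Kinf Fq) :
    HahnSeries.single 1 1 * (tvar Fq * f) = f := by
  rw [tvar, ← mul_assoc, HahnSeries.single_mul_single, one_mul, add_neg_cancel,
    HahnSeries.single_zero_one, one_mul]

theorem absK_lt_one_iff [Fintype Fq] {f : Kinf Fq} : absK f < 1 ↔ f ∈ vanishBelow Fq 1 := by
  simpa using absK_lt_zpow_iff (f := f) (N := 0)

theorem absK_tvar_mul_sub_lt_one_iff [Fintype Fq] {y : Kinf Fq} {a : Fq} :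
    absK (tvar Fq * y - algebraMap Fq (Kinf Fq) a) < 1 ↔
      y ∈ (HahnSeries.single 1 a : Kinf Fq) +ᵥ (vanishBelow Fq 2 : Set (Kinf Fq)) := by
  rw [mem_leftAddCoset_iff, ← tvar_mul_single_one, ← mul_sub, absK_lt_one_iff, tvar,
    single_one_mul_mem_vanishBelow_iff, neg_add_eq_sub]
  norm_num

theorem mul_aeval_mem_vanishBelow_two {σ : Type*} {F : MvPolynomial σ Fq}
    (hF : F.IsHomogeneous 3) {b : σ → Fq} (hbF : MvPolynomial.eval b F = 0)
    {φ : Kinf Fq} (hφ : φ ∈ vanishBelow Fq (-2)) {u : σ → Kinf Fq}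
    (hu : ∀ i, tvar Fq * u i - algebraMap Fq (Kinf Fq) (b i) ∈ vanishBelow Fq 1) :
    φ * MvPolynomial.aeval u F ∈ vanishBelow Fq 2 := by
  have hX : (HahnSeries.single 1 1 : Kinf Fq) ^ 3 ∈ vanishBelow Fq 3 := by
    rw [HahnSeries.single_pow, one_pow]
    intro k hk
    exact HahnSeries.coeff_single_of_ne (by norm_num; omega)
  have hu' : u = fun i => HahnSeries.single 1 1 * (tvar Fq * u i) :=
    funext fun i => (single_one_mul_tvar_mul (u i)).symm
  rw [hu', hF.aeval_const_mul]
  simpa using mul_mem_vanishBelow hφ (mul_mem_vanishBelow hX (aeval_mem_vanishBelow_one F hu hbF))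

theorem psiK_eq_one_of_mem_vanishBelow_two [Fintype Fq] [Algebra (ZMod (ringChar Fq)) Fq]
    {f : Kinf Fq} (hf : f ∈ vanishBelow Fq 2) : psiK f = 1 := by
  simp [psiK, hf 1 one_lt_two]


theorem setOf_absK_tvar_mul_sub_lt_one_eq_pi [Fintype Fq] {ι : Type*} (b : ι → Fq) :
    {u : ι → Kinf Fq | ∀ i, absK (tvar Fq * u i - algebraMap Fq (Kinf Fq) (b i)) < 1} =
      Set.univ.pi fun i => (HahnSeries.single 1 (b i) : Kinf Fq) +ᵥ
        (vanishBelow Fq 2 : Set (Kinf Fq)) := by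
  ext u
  simp [absK_tvar_mul_sub_lt_one_iff]

variable [Fintype Fq] [MeasurableSpace (Kinf Fq)] {μ : Measure (Kinf Fq)}

theorem setIntegral_psiK_mul_aeval [Algebra (ZMod (ringChar Fq)) Fq] [SigmaFinite μ]
    (hμ : ∀ (c : Kinf Fq) (m : ℤ), μ (c +ᵥ (vanishBelow Fq m : Set (Kinf Fq))) =
      ENNReal.ofReal ((Fintype.card Fq : ℝ) ^ (1 - m)))
    {n : ℕ} {F : MvPolynomial (Fin n) Fq} (hF : F.IsHomogeneous 3) {b : Fin n → Fq}
    (hbF : MvPolynomial.eval b F = 0) {φ : Kinf Fq} (hφ : φ ∈ vanishBelow Fq (-2)) :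
    ∫ u in {u : Fin n → Kinf Fq | ∀ i, absK (tvar Fq * u i - algebraMap Fq (Kinf Fq) (b i)) < 1},
      psiK (φ * MvPolynomial.aeval u F) ∂(Measure.pi fun _ => μ) =
        (((Fintype.card Fq : ℝ) ^ (-(n : ℤ)) : ℝ) : ℂ) := by
  have hbox := setOf_absK_tvar_mul_sub_lt_one_eq_pi b
  have hnull : NullMeasurableSet {u : Fin n → Kinf Fq |
      ∀ i, absK (tvar Fq * u i - algebraMap Fq (Kinf Fq) (b i)) < 1} (Measure.pi fun _ => μ) :=
    hbox ▸ NullMeasurableSet.univ_pi fun i => nullMeasurableSet_vadd_vanishBelow hμ _ _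
  rw [setIntegral_congr_fun₀ hnull (g := fun _ => (1 : ℂ)) fun u hu =>
      psiK_eq_one_of_mem_vanishBelow_two (mul_aeval_mem_vanishBelow_two hF hbF hφ
        fun i => absK_lt_one_iff.mp (hu i)),
    setIntegral_const, measureReal_def, hbox, Measure.pi_pi]
  simp only [hμ, Finset.prod_const, Finset.card_univ, Fintype.card_fin]
  rw [ENNReal.toReal_pow, ENNReal.toReal_ofReal (by positivity), ← zpow_natCast, ← zpow_mul]
  norm_num

end SingularIntegral

theorem stmt_18_general {Fq : Type} [Field Fq] [Fintype Fq] [Algebra (ZMod (ringChar Fq)) Fq]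
    [MeasurableSpace (Kinf Fq)] (μ : Measure (Kinf Fq)) [SigmaFinite μ]
    (hinv : ∀ a : Kinf Fq, ∀ s : Set (Kinf Fq), μ ((a + ·) ⁻¹' s) = μ s)
    (hball : ∀ N : ℤ, μ {α : Kinf Fq | absK α < (Fintype.card Fq : ℝ) ^ N}
        = ENNReal.ofReal ((Fintype.card Fq : ℝ) ^ N))
    {n : ℕ} (F : MvPolynomial (Fin n) Fq)
    (hF : F.IsHomogeneous 3)
    (b : Fin n → Fq) (hbF : MvPolynomial.eval b F = 0) :
    (∫ φ in {φ : Kinf Fq | absK φ < (Fintype.card Fq : ℝ) ^ (3 : ℤ)},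
      (∫ u in {u : Fin n → Kinf Fq |
          ∀ i, absK (tvar Fq * u i - algebraMap Fq (Kinf Fq) (b i)) < 1},
        psiK (φ * MvPolynomial.aeval u F)
        ∂(MeasureTheory.Measure.pi fun _ : Fin n => μ)) ∂μ)
      = (Fintype.card Fq : ℂ) ^ (-(n : ℤ) + 3) := by
  have hμ := measure_vadd_vanishBelow hinv hball
  rw [setIntegral_congr_fun₀ (nullMeasurableSet_setOf_absK_lt hμ 3) fun φ hφ =>
      setIntegral_psiK_mul_aeval hμ hF hbF (by simpa using absK_lt_zpow_iff.mp hφ),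
    setIntegral_const, measureReal_def, hball 3, ENNReal.toReal_ofReal (by positivity),
    Complex.real_smul]
  push_cast
  rw [zpow_add₀ (by exact_mod_cast Fintype.card_ne_zero), mul_comm]

/-- the singular integral
`𝔍 = ∫_{|φ|<q³} ∫_{|tu−b|<1} ψ(φF(u)) du dφ` equals `q^{-(n-3)}`. -/
theorem stmt_18 {Fq : Type} [Field Fq] [Fintype Fq] [Algebra (ZMod (ringChar Fq)) Fq]
    [MeasurableSpace (Kinf Fq)] (μ : Measure (Kinf Fq)) [SigmaFinite μ]
    (hinv : ∀ a : Kinf Fq, ∀ s : Set (Kinf Fq), μ ((a + ·) ⁻¹' s) = μ s)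
    (hball : ∀ N : ℤ, μ {α : Kinf Fq | absK α < (Fintype.card Fq : ℝ) ^ N}
        = ENNReal.ofReal ((Fintype.card Fq : ℝ) ^ N))
    (hchar : 3 < ringChar Fq)
    {n : ℕ} (hn : 10 ≤ n) (F : MvPolynomial (Fin n) Fq)
    (hF : F.IsHomogeneous 3) (hns : NonsingularForm F)
    (b : Fin n → Fq) (hbF : MvPolynomial.eval b F = 0)
    (hbH : MvPolynomial.eval b (hessianDet F) ≠ 0) :
    (∫ φ in {φ : Kinf Fq | absK φ < (Fintype.card Fq : ℝ) ^ (3 : ℤ)},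
      (∫ u in {u : Fin n → Kinf Fq |
          ∀ i, absK (tvar Fq * u i - algebraMap Fq (Kinf Fq) (b i)) < 1},
        psiK (φ * MvPolynomial.aeval u F)
        ∂(MeasureTheory.Measure.pi fun _ : Fin n => μ)) ∂μ)
      = (Fintype.card Fq : ℂ) ^ (-(n : ℤ) + 3) :=
  stmt_18_general μ hinv hball F hF b hbF
end
end
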